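/- arXiv:1405.5843 — 2 statements merged into one kernel-verified Lean document; each statement's English description precedes it below -/
import Mathlib

section
/- Adding to the Poisson structure P_{g,f} a term Φ(γ)·[[Γ̂,0],[0,0]], where Φ(γ) is an arbitrary smooth function, preserves the Jacobi identity; i.e., the resulting bivector is still a Poisson structure on ℝ⁶. -/
open Matrix

/-- The skew-symmetric 3×3 matrix `â` of a vector `a ∈ ℝ³`, with `â x = a × x`. -/
def hat (a : Fin 3 → ℝ) : Matrix (Fin 3) (Fin 3) ℝ :=
  !![0, -a 2, a 1; a 2, 0, -a 0; -a 1, a 0, 0]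

/-- Points of ℝ⁶ = ℝ³(M) × ℝ³(γ), indexed by `Fin 3 ⊕ Fin 3`. -/
abbrev R6 := (Fin 3 ⊕ Fin 3) → ℝ

/-- Gradient of a function of `γ ∈ ℝ³`. -/
noncomputable def grad3 (g : (Fin 3 → ℝ) → ℝ) (γ : Fin 3 → ℝ) : Fin 3 → ℝ :=
  fun i => fderiv ℝ g γ (Pi.single i 1)

/-- The bivector P_{g,f} = g[[M̂,Γ̂],[Γ̂,0]] + (∂g/∂γ − f(γ)γ, M)[[Γ̂,0],[0,0]]
augmented by the extra term Φ(γ)[[Γ̂,0],[0,0]]. -/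
noncomputable def Pgfφ (g f Φ : (Fin 3 → ℝ) → ℝ) (x : R6) :
    Matrix (Fin 3 ⊕ Fin 3) (Fin 3 ⊕ Fin 3) ℝ :=
  g (x ∘ Sum.inr) •
      Matrix.fromBlocks (hat (x ∘ Sum.inl)) (hat (x ∘ Sum.inr)) (hat (x ∘ Sum.inr)) 0
    + ((grad3 g (x ∘ Sum.inr) - f (x ∘ Sum.inr) • (x ∘ Sum.inr)) ⬝ᵥ (x ∘ Sum.inl)
        + Φ (x ∘ Sum.inr)) •
      Matrix.fromBlocks (hat (x ∘ Sum.inr)) 0 0 0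

namespace St9

lemma hat_zero (i j : Fin 3) : hat (0 : Fin 3 → ℝ) i j = 0 := by
  fin_cases i <;> fin_cases j <;> simp [hat, vecHead, vecTail]

lemma hat_sum (a : Fin 3 → ℝ) (i j : Fin 3) :
    hat a i j = ∑ k, a k * hat (Pi.single k 1) i j := by
  fin_cases i <;> fin_cases j <;>
    norm_num [hat, Fin.sum_univ_three, Pi.single_apply]

noncomputable def prR : R6 →L[ℝ] (Fin 3 → ℝ) :=
  ContinuousLinearMap.pi fun i => ContinuousLinearMap.proj (Sum.inr i)

lemma single_inl_comp_inr (l : Fin 3) : (Pi.single (Sum.inl l) 1 : R6) ∘ Sum.inr = 0 := by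
  funext i; simp [Pi.single_apply]
lemma single_inr_comp_inl (l : Fin 3) : (Pi.single (Sum.inr l) 1 : R6) ∘ Sum.inl = 0 := by
  funext i; simp [Pi.single_apply]
lemma single_inr_comp_inr (l : Fin 3) :
    (Pi.single (Sum.inr l) 1 : R6) ∘ Sum.inr = Pi.single l 1 := by
  funext i; simp [Pi.single_apply]
lemma single_inl_comp_inl (l : Fin 3) :
    (Pi.single (Sum.inl l) 1 : R6) ∘ Sum.inl = Pi.single l 1 := by
  funext i; simp [Pi.single_apply]

variable (g f Φ : (Fin 3 → ℝ) → ℝ) (x : R6)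

lemma diff_comp_inr {u : (Fin 3 → ℝ) → ℝ} (hu : ContDiff ℝ (⊤ : ℕ∞) u) :
    DifferentiableAt ℝ (fun y : R6 => u (y ∘ Sum.inr)) x :=
  DifferentiableAt.comp x ((hu.differentiable (by simp)) (x ∘ Sum.inr)) prR.differentiableAt

lemma fderiv_comp_inr {u : (Fin 3 → ℝ) → ℝ} (hu : ContDiff ℝ (⊤ : ℕ∞) u) (v : R6) :
    fderiv ℝ (fun y : R6 => u (y ∘ Sum.inr)) x v
      = fderiv ℝ u (x ∘ Sum.inr) (v ∘ Sum.inr) := by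
  have h : (fun y : R6 => u (y ∘ Sum.inr)) = u ∘ prR := rfl
  rw [h, fderiv_comp x ((hu.differentiable (by simp)) _) prR.differentiableAt, prR.fderiv]
  rfl

lemma diff_coord (s : Fin 3 ⊕ Fin 3) : DifferentiableAt ℝ (fun y : R6 => y s) x :=
  (ContinuousLinearMap.proj s : R6 →L[ℝ] ℝ).differentiableAt

lemma fderiv_coord (s : Fin 3 ⊕ Fin 3) (v : R6) :
    fderiv ℝ (fun y : R6 => y s) x v = v s := by
  have h : (fun y : R6 => y s) = (ContinuousLinearMap.proj s : R6 →L[ℝ] ℝ) := rfl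
  rw [h, ContinuousLinearMap.fderiv]; rfl

/-- A_m(γ) = ∂_m g − f γ_m -/
noncomputable def Aa (γ : Fin 3 → ℝ) (m : Fin 3) : ℝ := grad3 g γ m - f γ * γ m

/-- the scalar coefficient C(x) -/
noncomputable def Cf (x : R6) : ℝ :=
  (∑ m, Aa g f (x ∘ Sum.inr) m * x (Sum.inl m)) + Φ (x ∘ Sum.inr)

lemma Cf_eq :
    (grad3 g (x ∘ Sum.inr) - f (x ∘ Sum.inr) • (x ∘ Sum.inr)) ⬝ᵥ (x ∘ Sum.inl)
      + Φ (x ∘ Sum.inr) = Cf g f Φ x := by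
  simp [Cf, Aa, dotProduct]

lemma P_LL (i j : Fin 3) : Pgfφ g f Φ x (Sum.inl i) (Sum.inl j)
    = g (x ∘ Sum.inr) * hat (x ∘ Sum.inl) i j + Cf g f Φ x * hat (x ∘ Sum.inr) i j := by
  simp [Pgfφ, ← Cf_eq]

lemma P_LR (i j : Fin 3) : Pgfφ g f Φ x (Sum.inl i) (Sum.inr j)
    = g (x ∘ Sum.inr) * hat (x ∘ Sum.inr) i j := by
  simp [Pgfφ]

lemma P_RL (i j : Fin 3) : Pgfφ g f Φ x (Sum.inr i) (Sum.inl j)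
    = g (x ∘ Sum.inr) * hat (x ∘ Sum.inr) i j := by
  simp [Pgfφ]

lemma P_RR (i j : Fin 3) : Pgfφ g f Φ x (Sum.inr i) (Sum.inr j) = 0 := by
  simp [Pgfφ]


variable {g f Φ}

lemma smooth_grad (hg : ContDiff ℝ (⊤ : ℕ∞) g) (m : Fin 3) :
    ContDiff ℝ (⊤ : ℕ∞) (fun γ => grad3 g γ m) :=
  (hg.fderiv_right (by simp)).clm_apply contDiff_const

lemma smooth_Aa (hg : ContDiff ℝ (⊤ : ℕ∞) g) (hf : ContDiff ℝ (⊤ : ℕ∞) f) (m : Fin 3) :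
    ContDiff ℝ (⊤ : ℕ∞) (fun γ => Aa g f γ m) :=
  (smooth_grad hg m).sub
    (hf.mul (ContinuousLinearMap.proj m : (Fin 3 → ℝ) →L[ℝ] ℝ).contDiff)

lemma diff_Cf (hg : ContDiff ℝ (⊤ : ℕ∞) g) (hf : ContDiff ℝ (⊤ : ℕ∞) f) (hΦ : ContDiff ℝ (⊤ : ℕ∞) Φ) :
    DifferentiableAt ℝ (Cf g f Φ) x := by
  unfold Cf
  exact (DifferentiableAt.fun_sum fun m _ =>
      ((diff_comp_inr x (smooth_Aa hg hf m)).fun_mul (diff_coord x (Sum.inl m)))).add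
    (diff_comp_inr x hΦ)

lemma fderiv_Cf (hg : ContDiff ℝ (⊤ : ℕ∞) g) (hf : ContDiff ℝ (⊤ : ℕ∞) f) (hΦ : ContDiff ℝ (⊤ : ℕ∞) Φ) (v : R6) :
    fderiv ℝ (Cf g f Φ) x v
      = (∑ m, (Aa g f (x ∘ Sum.inr) m * v (Sum.inl m)
          + x (Sum.inl m) * fderiv ℝ (fun z => Aa g f z m) (x ∘ Sum.inr) (v ∘ Sum.inr)))
        + fderiv ℝ Φ (x ∘ Sum.inr) (v ∘ Sum.inr) := by
  unfold Cf
  rw [fderiv_fun_add (DifferentiableAt.fun_sum fun m _ =>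
      ((diff_comp_inr x (smooth_Aa hg hf m)).fun_mul (diff_coord x (Sum.inl m))))
    (diff_comp_inr x hΦ)]
  rw [ContinuousLinearMap.add_apply, fderiv_comp_inr x hΦ]
  congr 1
  rw [fderiv_fun_sum fun m _ =>
      ((diff_comp_inr x (smooth_Aa hg hf m)).fun_mul (diff_coord x (Sum.inl m)))]
  rw [ContinuousLinearMap.sum_apply]
  refine Finset.sum_congr rfl fun m _ => ?_
  rw [fderiv_fun_mul (diff_comp_inr x (smooth_Aa hg hf m)) (diff_coord x (Sum.inl m))]
  simp only [ContinuousLinearMap.add_apply, ContinuousLinearMap.smul_apply, smul_eq_mul,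
    fderiv_coord, fderiv_comp_inr x (smooth_Aa hg hf m)]


/-- Hessian entries of g. -/
noncomputable def Hs (g : (Fin 3 → ℝ) → ℝ) (γ : Fin 3 → ℝ) (l m : Fin 3) : ℝ :=
  grad3 (fun z => grad3 g z m) γ l

lemma Hs_symm (hg : ContDiff ℝ (⊤ : ℕ∞) g) (γ : Fin 3 → ℝ) (l m : Fin 3) :
    Hs g γ l m = Hs g γ m l := by
  have hsym : IsSymmSndFDerivAt ℝ g γ :=
    (hg.contDiffAt).isSymmSndFDerivAt (by rw [minSmoothness_of_isRCLikeNormedField]; exact WithTop.coe_le_coe.mpr le_top)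
  have hd : DifferentiableAt ℝ (fderiv ℝ g) γ :=
    ((hg.fderiv_right (m := (⊤ : ℕ∞)) (by simp)).differentiable (by simp)) γ
  have key : ∀ a b : Fin 3, Hs g γ a b
      = fderiv ℝ (fderiv ℝ g) γ (Pi.single a 1) (Pi.single b 1) := by
    intro a b
    have h1 : (fun z => grad3 g z b) = (fun z => (fderiv ℝ g z) (Pi.single b 1)) := rfl
    have := fderiv_clm_apply (c := fderiv ℝ g) (u := fun _ => (Pi.single b 1 : Fin 3 → ℝ))
      hd (differentiableAt_const _)
    simp only [Hs, grad3, h1]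
    rw [this]
    simp
  rw [key, key, hsym.eq]

lemma fderiv_Aa (hg : ContDiff ℝ (⊤ : ℕ∞) g) (hf : ContDiff ℝ (⊤ : ℕ∞) f) (γ : Fin 3 → ℝ) (l m : Fin 3) :
    fderiv ℝ (fun z => Aa g f z m) γ (Pi.single l 1)
      = Hs g γ l m - (grad3 f γ l * γ m + f γ * (Pi.single l 1 : Fin 3 → ℝ) m) := by
  have hcm : DifferentiableAt ℝ (fun z' : Fin 3 → ℝ => z' m) γ :=
    (ContinuousLinearMap.proj m : (Fin 3 → ℝ) →L[ℝ] ℝ).differentiableAt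
  have hgr : DifferentiableAt ℝ (fun z' => grad3 g z' m) γ :=
    (smooth_grad hg m).differentiable (by simp) γ
  have hmul : DifferentiableAt ℝ (fun z' => f z' * z' m) γ :=
    (hf.differentiable (by simp) γ).mul hcm
  have h1 : (fun z => Aa g f z m)
      = fun z => (fun z' => grad3 g z' m) z - (fun z' => f z' * z' m) z := rfl
  rw [h1, fderiv_fun_sub hgr hmul, ContinuousLinearMap.sub_apply, fderiv_fun_mul (hf.differentiable (by simp) γ) hcm]
  have h2 : fderiv ℝ (fun z : Fin 3 → ℝ => z m) γ (Pi.single l 1) = (Pi.single l 1 : Fin 3 → ℝ) m := by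
    have h : (fun z : Fin 3 → ℝ => z m)
        = (ContinuousLinearMap.proj m : (Fin 3 → ℝ) →L[ℝ] ℝ) := rfl
    rw [h, ContinuousLinearMap.fderiv]; rfl
  simp only [ContinuousLinearMap.add_apply, ContinuousLinearMap.smul_apply, smul_eq_mul, h2]
  have h3 : fderiv ℝ (fun z => grad3 g z m) γ (Pi.single l 1) = Hs g γ l m := rfl
  have h4 : fderiv ℝ f γ (Pi.single l 1) = grad3 f γ l := rfl
  rw [h3, h4]
  ring

lemma diff_mul_hat (b : R6 → ℝ) (hb : DifferentiableAt ℝ b x) (c : Fin 3 → Fin 3 ⊕ Fin 3)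
    (i j : Fin 3) :
    DifferentiableAt ℝ (fun y : R6 => b y * hat (fun k => y (c k)) i j) x := by
  have h1 : (fun y : R6 => b y * hat (fun k => y (c k)) i j)
      = fun y : R6 => ∑ k, (b y * y (c k)) * hat (Pi.single k 1) i j := by
    funext y
    rw [hat_sum, Finset.mul_sum]
    exact Finset.sum_congr rfl fun k _ => by ring
  rw [h1]
  exact DifferentiableAt.fun_sum fun k _ => (hb.fun_mul (diff_coord x (c k))).mul_const _

lemma fderiv_mul_hat (b : R6 → ℝ) (hb : DifferentiableAt ℝ b x) (c : Fin 3 → Fin 3 ⊕ Fin 3)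
    (i j : Fin 3) (v : R6) :
    fderiv ℝ (fun y : R6 => b y * hat (fun k => y (c k)) i j) x v
      = fderiv ℝ b x v * hat (fun k => x (c k)) i j
        + b x * hat (fun k => v (c k)) i j := by
  have h1 : (fun y : R6 => b y * hat (fun k => y (c k)) i j)
      = fun y : R6 => ∑ k, (b y * y (c k)) * hat (Pi.single k 1) i j := by
    funext y
    rw [hat_sum, Finset.mul_sum]
    exact Finset.sum_congr rfl fun k _ => by ring
  rw [h1, fderiv_fun_sum fun k _ => (hb.fun_mul (diff_coord x (c k))).mul_const _,
    ContinuousLinearMap.sum_apply]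
  rw [hat_sum (fun k => x (c k)) i j, hat_sum (fun k => v (c k)) i j,
    Finset.mul_sum, Finset.mul_sum, ← Finset.sum_add_distrib]
  refine Finset.sum_congr rfl fun k _ => ?_
  rw [fderiv_mul_const (hb.fun_mul (diff_coord x (c k))),
    ContinuousLinearMap.smul_apply, fderiv_fun_mul hb (diff_coord x (c k))]
  simp only [ContinuousLinearMap.add_apply, ContinuousLinearMap.smul_apply, smul_eq_mul,
    fderiv_coord]
  ring

variable (hg : ContDiff ℝ (⊤ : ℕ∞) g) (hf : ContDiff ℝ (⊤ : ℕ∞) f) (hΦ : ContDiff ℝ (⊤ : ℕ∞) Φ)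
include hg hf hΦ

lemma fderiv_P_LL (i k : Fin 3) (v : R6) :
    fderiv ℝ (fun y => Pgfφ g f Φ y (Sum.inl i) (Sum.inl k)) x v
      = (fderiv ℝ (fun y : R6 => g (y ∘ Sum.inr)) x v * hat (x ∘ Sum.inl) i k
          + g (x ∘ Sum.inr) * hat (v ∘ Sum.inl) i k)
        + (fderiv ℝ (Cf g f Φ) x v * hat (x ∘ Sum.inr) i k
          + Cf g f Φ x * hat (v ∘ Sum.inr) i k) := by
  have h1 : (fun y => Pgfφ g f Φ y (Sum.inl i) (Sum.inl k))
      = fun y : R6 => (fun y' : R6 => g (y' ∘ Sum.inr) * hat (fun m => y' (Sum.inl m)) i k) y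
          + (fun y' : R6 => Cf g f Φ y' * hat (fun m => y' (Sum.inr m)) i k) y := by
    funext y; exact P_LL g f Φ y i k
  rw [h1, fderiv_fun_add (diff_mul_hat x _ (diff_comp_inr x hg) Sum.inl i k)
      (diff_mul_hat x _ (diff_Cf x hg hf hΦ) Sum.inr i k),
    ContinuousLinearMap.add_apply,
    fderiv_mul_hat x _ (diff_comp_inr x hg) Sum.inl i k,
    fderiv_mul_hat x _ (diff_Cf x hg hf hΦ) Sum.inr i k]
  rfl

omit hf hΦ in
lemma fderiv_P_LR (i k : Fin 3) (v : R6) :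
    fderiv ℝ (fun y => Pgfφ g f Φ y (Sum.inl i) (Sum.inr k)) x v
      = fderiv ℝ (fun y : R6 => g (y ∘ Sum.inr)) x v * hat (x ∘ Sum.inr) i k
        + g (x ∘ Sum.inr) * hat (v ∘ Sum.inr) i k := by
  have h1 : (fun y => Pgfφ g f Φ y (Sum.inl i) (Sum.inr k))
      = fun y : R6 => g (y ∘ Sum.inr) * hat (fun m => y (Sum.inr m)) i k := by
    funext y; exact P_LR g f Φ y i k
  rw [h1, fderiv_mul_hat x _ (diff_comp_inr x hg) Sum.inr i k]
  rfl

omit hf hΦ in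
lemma fderiv_P_RL (i k : Fin 3) (v : R6) :
    fderiv ℝ (fun y => Pgfφ g f Φ y (Sum.inr i) (Sum.inl k)) x v
      = fderiv ℝ (fun y : R6 => g (y ∘ Sum.inr)) x v * hat (x ∘ Sum.inr) i k
        + g (x ∘ Sum.inr) * hat (v ∘ Sum.inr) i k := by
  have h1 : (fun y => Pgfφ g f Φ y (Sum.inr i) (Sum.inl k))
      = fun y : R6 => g (y ∘ Sum.inr) * hat (fun m => y (Sum.inr m)) i k := by
    funext y; exact P_RL g f Φ y i k
  rw [h1, fderiv_mul_hat x _ (diff_comp_inr x hg) Sum.inr i k]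
  rfl

omit hg hf hΦ in
lemma fderiv_P_RR (i k : Fin 3) (v : R6) :
    fderiv ℝ (fun y => Pgfφ g f Φ y (Sum.inr i) (Sum.inr k)) x v = 0 := by
  have h1 : (fun y => Pgfφ g f Φ y (Sum.inr i) (Sum.inr k)) = fun _ : R6 => (0 : ℝ) := by
    funext y; exact P_RR g f Φ y i k
  rw [h1, fderiv_fun_const]
  rfl

omit hf hΦ in
lemma dG_M (l : Fin 3) :
    fderiv ℝ (fun y : R6 => g (y ∘ Sum.inr)) x (Pi.single (Sum.inl l) 1) = 0 := by
  rw [fderiv_comp_inr x hg, single_inl_comp_inr, map_zero]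

omit hf hΦ in
lemma dG_G (l : Fin 3) :
    fderiv ℝ (fun y : R6 => g (y ∘ Sum.inr)) x (Pi.single (Sum.inr l) 1)
      = grad3 g (x ∘ Sum.inr) l := by
  rw [fderiv_comp_inr x hg, single_inr_comp_inr]; rfl

lemma dCf_M (l : Fin 3) :
    fderiv ℝ (Cf g f Φ) x (Pi.single (Sum.inl l) 1) = Aa g f (x ∘ Sum.inr) l := by
  rw [fderiv_Cf x hg hf hΦ, single_inl_comp_inr]
  simp [Pi.single_apply, Sum.inl.injEq]

lemma dCf_G (l : Fin 3) :
    fderiv ℝ (Cf g f Φ) x (Pi.single (Sum.inr l) 1)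
      = (∑ m, x (Sum.inl m) * (Hs g (x ∘ Sum.inr) l m
          - (grad3 f (x ∘ Sum.inr) l * x (Sum.inr m)
            + f (x ∘ Sum.inr) * (Pi.single l 1 : Fin 3 → ℝ) m)))
        + grad3 Φ (x ∘ Sum.inr) l := by
  rw [fderiv_Cf x hg hf hΦ, single_inr_comp_inr]
  have hz : ∀ m : Fin 3, (Pi.single (Sum.inr l) 1 : R6) (Sum.inl m) = 0 := by
    intro m; simp [Pi.single_apply]
  have hΦ' : fderiv ℝ Φ (x ∘ Sum.inr) (Pi.single l 1) = grad3 Φ (x ∘ Sum.inr) l := rfl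
  simp only [hz, mul_zero, zero_add, hΦ', fderiv_Aa hg hf, Function.comp_apply]


set_option maxHeartbeats 2000000 in
lemma jac_LLL (i j k : Fin 3) :
    ∑ l : Fin 3 ⊕ Fin 3,
        (Pgfφ g f Φ x l (Sum.inl j) * fderiv ℝ (fun y => Pgfφ g f Φ y (Sum.inl i) (Sum.inl k)) x (Pi.single l 1)
          + Pgfφ g f Φ x l (Sum.inl i) * fderiv ℝ (fun y => Pgfφ g f Φ y (Sum.inl k) (Sum.inl j)) x (Pi.single l 1)
          + Pgfφ g f Φ x l (Sum.inl k) * fderiv ℝ (fun y => Pgfφ g f Φ y (Sum.inl j) (Sum.inl i)) x (Pi.single l 1))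
        = 0 := by
  have h10 : Hs g (x ∘ Sum.inr) 1 0 = Hs g (x ∘ Sum.inr) 0 1 := Hs_symm hg _ 1 0
  have h20 : Hs g (x ∘ Sum.inr) 2 0 = Hs g (x ∘ Sum.inr) 0 2 := Hs_symm hg _ 2 0
  have h21 : Hs g (x ∘ Sum.inr) 2 1 = Hs g (x ∘ Sum.inr) 1 2 := Hs_symm hg _ 2 1
  simp only [Fintype.sum_sum_type, P_LL g f Φ x, P_LR g f Φ x, P_RL g f Φ x, P_RR g f Φ x,
    fderiv_P_LL x hg hf hΦ, fderiv_P_LR x hg, fderiv_P_RL x hg, fderiv_P_RR x,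
    dG_M x hg, dG_G x hg, dCf_M x hg hf hΦ, dCf_G x hg hf hΦ,
    single_inl_comp_inl, single_inl_comp_inr, single_inr_comp_inl, single_inr_comp_inr,
    hat_zero, Aa]
  fin_cases i <;> fin_cases j <;> fin_cases k <;>
    norm_num [hat, Fin.sum_univ_three, Pi.single_apply, Function.comp_apply, Matrix.cons_val_two, Matrix.vecHead, Matrix.vecTail] <;>
    (try norm_num [Fin.ext_iff]) <;> (try simp only [h10, h20, h21]) <;> ring

set_option maxHeartbeats 2000000 in
lemma jac_LLR (i j k : Fin 3) :
    ∑ l : Fin 3 ⊕ Fin 3,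
        (Pgfφ g f Φ x l (Sum.inl j) * fderiv ℝ (fun y => Pgfφ g f Φ y (Sum.inl i) (Sum.inr k)) x (Pi.single l 1)
          + Pgfφ g f Φ x l (Sum.inl i) * fderiv ℝ (fun y => Pgfφ g f Φ y (Sum.inr k) (Sum.inl j)) x (Pi.single l 1)
          + Pgfφ g f Φ x l (Sum.inr k) * fderiv ℝ (fun y => Pgfφ g f Φ y (Sum.inl j) (Sum.inl i)) x (Pi.single l 1))
        = 0 := by
  have h10 : Hs g (x ∘ Sum.inr) 1 0 = Hs g (x ∘ Sum.inr) 0 1 := Hs_symm hg _ 1 0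
  have h20 : Hs g (x ∘ Sum.inr) 2 0 = Hs g (x ∘ Sum.inr) 0 2 := Hs_symm hg _ 2 0
  have h21 : Hs g (x ∘ Sum.inr) 2 1 = Hs g (x ∘ Sum.inr) 1 2 := Hs_symm hg _ 2 1
  simp only [Fintype.sum_sum_type, P_LL g f Φ x, P_LR g f Φ x, P_RL g f Φ x, P_RR g f Φ x,
    fderiv_P_LL x hg hf hΦ, fderiv_P_LR x hg, fderiv_P_RL x hg, fderiv_P_RR x,
    dG_M x hg, dG_G x hg, dCf_M x hg hf hΦ, dCf_G x hg hf hΦ,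
    single_inl_comp_inl, single_inl_comp_inr, single_inr_comp_inl, single_inr_comp_inr,
    hat_zero, Aa]
  fin_cases i <;> fin_cases j <;> fin_cases k <;>
    norm_num [hat, Fin.sum_univ_three, Pi.single_apply, Function.comp_apply, Matrix.cons_val_two, Matrix.vecHead, Matrix.vecTail] <;>
    (try norm_num [Fin.ext_iff]) <;> (try simp only [h10, h20, h21]) <;> ring

set_option maxHeartbeats 2000000 in
lemma jac_LRL (i j k : Fin 3) :
    ∑ l : Fin 3 ⊕ Fin 3,
        (Pgfφ g f Φ x l (Sum.inr j) * fderiv ℝ (fun y => Pgfφ g f Φ y (Sum.inl i) (Sum.inl k)) x (Pi.single l 1)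
          + Pgfφ g f Φ x l (Sum.inl i) * fderiv ℝ (fun y => Pgfφ g f Φ y (Sum.inl k) (Sum.inr j)) x (Pi.single l 1)
          + Pgfφ g f Φ x l (Sum.inl k) * fderiv ℝ (fun y => Pgfφ g f Φ y (Sum.inr j) (Sum.inl i)) x (Pi.single l 1))
        = 0 := by
  have h10 : Hs g (x ∘ Sum.inr) 1 0 = Hs g (x ∘ Sum.inr) 0 1 := Hs_symm hg _ 1 0
  have h20 : Hs g (x ∘ Sum.inr) 2 0 = Hs g (x ∘ Sum.inr) 0 2 := Hs_symm hg _ 2 0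
  have h21 : Hs g (x ∘ Sum.inr) 2 1 = Hs g (x ∘ Sum.inr) 1 2 := Hs_symm hg _ 2 1
  simp only [Fintype.sum_sum_type, P_LL g f Φ x, P_LR g f Φ x, P_RL g f Φ x, P_RR g f Φ x,
    fderiv_P_LL x hg hf hΦ, fderiv_P_LR x hg, fderiv_P_RL x hg, fderiv_P_RR x,
    dG_M x hg, dG_G x hg, dCf_M x hg hf hΦ, dCf_G x hg hf hΦ,
    single_inl_comp_inl, single_inl_comp_inr, single_inr_comp_inl, single_inr_comp_inr,
    hat_zero, Aa]
  fin_cases i <;> fin_cases j <;> fin_cases k <;>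
    norm_num [hat, Fin.sum_univ_three, Pi.single_apply, Function.comp_apply, Matrix.cons_val_two, Matrix.vecHead, Matrix.vecTail] <;>
    (try norm_num [Fin.ext_iff]) <;> (try simp only [h10, h20, h21]) <;> ring

set_option maxHeartbeats 2000000 in
lemma jac_LRR (i j k : Fin 3) :
    ∑ l : Fin 3 ⊕ Fin 3,
        (Pgfφ g f Φ x l (Sum.inr j) * fderiv ℝ (fun y => Pgfφ g f Φ y (Sum.inl i) (Sum.inr k)) x (Pi.single l 1)
          + Pgfφ g f Φ x l (Sum.inl i) * fderiv ℝ (fun y => Pgfφ g f Φ y (Sum.inr k) (Sum.inr j)) x (Pi.single l 1)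
          + Pgfφ g f Φ x l (Sum.inr k) * fderiv ℝ (fun y => Pgfφ g f Φ y (Sum.inr j) (Sum.inl i)) x (Pi.single l 1))
        = 0 := by
  have h10 : Hs g (x ∘ Sum.inr) 1 0 = Hs g (x ∘ Sum.inr) 0 1 := Hs_symm hg _ 1 0
  have h20 : Hs g (x ∘ Sum.inr) 2 0 = Hs g (x ∘ Sum.inr) 0 2 := Hs_symm hg _ 2 0
  have h21 : Hs g (x ∘ Sum.inr) 2 1 = Hs g (x ∘ Sum.inr) 1 2 := Hs_symm hg _ 2 1
  simp only [Fintype.sum_sum_type, P_LL g f Φ x, P_LR g f Φ x, P_RL g f Φ x, P_RR g f Φ x,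
    fderiv_P_LL x hg hf hΦ, fderiv_P_LR x hg, fderiv_P_RL x hg, fderiv_P_RR x,
    dG_M x hg, dG_G x hg, dCf_M x hg hf hΦ, dCf_G x hg hf hΦ,
    single_inl_comp_inl, single_inl_comp_inr, single_inr_comp_inl, single_inr_comp_inr,
    hat_zero, Aa]
  fin_cases i <;> fin_cases j <;> fin_cases k <;>
    norm_num [hat, Fin.sum_univ_three, Pi.single_apply, Function.comp_apply, Matrix.cons_val_two, Matrix.vecHead, Matrix.vecTail] <;>
    (try norm_num [Fin.ext_iff]) <;> (try simp only [h10, h20, h21]) <;> ring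

set_option maxHeartbeats 2000000 in
lemma jac_RLL (i j k : Fin 3) :
    ∑ l : Fin 3 ⊕ Fin 3,
        (Pgfφ g f Φ x l (Sum.inl j) * fderiv ℝ (fun y => Pgfφ g f Φ y (Sum.inr i) (Sum.inl k)) x (Pi.single l 1)
          + Pgfφ g f Φ x l (Sum.inr i) * fderiv ℝ (fun y => Pgfφ g f Φ y (Sum.inl k) (Sum.inl j)) x (Pi.single l 1)
          + Pgfφ g f Φ x l (Sum.inl k) * fderiv ℝ (fun y => Pgfφ g f Φ y (Sum.inl j) (Sum.inr i)) x (Pi.single l 1))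
        = 0 := by
  have h10 : Hs g (x ∘ Sum.inr) 1 0 = Hs g (x ∘ Sum.inr) 0 1 := Hs_symm hg _ 1 0
  have h20 : Hs g (x ∘ Sum.inr) 2 0 = Hs g (x ∘ Sum.inr) 0 2 := Hs_symm hg _ 2 0
  have h21 : Hs g (x ∘ Sum.inr) 2 1 = Hs g (x ∘ Sum.inr) 1 2 := Hs_symm hg _ 2 1
  simp only [Fintype.sum_sum_type, P_LL g f Φ x, P_LR g f Φ x, P_RL g f Φ x, P_RR g f Φ x,
    fderiv_P_LL x hg hf hΦ, fderiv_P_LR x hg, fderiv_P_RL x hg, fderiv_P_RR x,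
    dG_M x hg, dG_G x hg, dCf_M x hg hf hΦ, dCf_G x hg hf hΦ,
    single_inl_comp_inl, single_inl_comp_inr, single_inr_comp_inl, single_inr_comp_inr,
    hat_zero, Aa]
  fin_cases i <;> fin_cases j <;> fin_cases k <;>
    norm_num [hat, Fin.sum_univ_three, Pi.single_apply, Function.comp_apply, Matrix.cons_val_two, Matrix.vecHead, Matrix.vecTail] <;>
    (try norm_num [Fin.ext_iff]) <;> (try simp only [h10, h20, h21]) <;> ring

set_option maxHeartbeats 2000000 in
lemma jac_RLR (i j k : Fin 3) :
    ∑ l : Fin 3 ⊕ Fin 3,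
        (Pgfφ g f Φ x l (Sum.inl j) * fderiv ℝ (fun y => Pgfφ g f Φ y (Sum.inr i) (Sum.inr k)) x (Pi.single l 1)
          + Pgfφ g f Φ x l (Sum.inr i) * fderiv ℝ (fun y => Pgfφ g f Φ y (Sum.inr k) (Sum.inl j)) x (Pi.single l 1)
          + Pgfφ g f Φ x l (Sum.inr k) * fderiv ℝ (fun y => Pgfφ g f Φ y (Sum.inl j) (Sum.inr i)) x (Pi.single l 1))
        = 0 := by
  have h10 : Hs g (x ∘ Sum.inr) 1 0 = Hs g (x ∘ Sum.inr) 0 1 := Hs_symm hg _ 1 0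
  have h20 : Hs g (x ∘ Sum.inr) 2 0 = Hs g (x ∘ Sum.inr) 0 2 := Hs_symm hg _ 2 0
  have h21 : Hs g (x ∘ Sum.inr) 2 1 = Hs g (x ∘ Sum.inr) 1 2 := Hs_symm hg _ 2 1
  simp only [Fintype.sum_sum_type, P_LL g f Φ x, P_LR g f Φ x, P_RL g f Φ x, P_RR g f Φ x,
    fderiv_P_LL x hg hf hΦ, fderiv_P_LR x hg, fderiv_P_RL x hg, fderiv_P_RR x,
    dG_M x hg, dG_G x hg, dCf_M x hg hf hΦ, dCf_G x hg hf hΦ,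
    single_inl_comp_inl, single_inl_comp_inr, single_inr_comp_inl, single_inr_comp_inr,
    hat_zero, Aa]
  fin_cases i <;> fin_cases j <;> fin_cases k <;>
    norm_num [hat, Fin.sum_univ_three, Pi.single_apply, Function.comp_apply, Matrix.cons_val_two, Matrix.vecHead, Matrix.vecTail] <;>
    (try norm_num [Fin.ext_iff]) <;> (try simp only [h10, h20, h21]) <;> ring

set_option maxHeartbeats 2000000 in
lemma jac_RRL (i j k : Fin 3) :
    ∑ l : Fin 3 ⊕ Fin 3,
        (Pgfφ g f Φ x l (Sum.inr j) * fderiv ℝ (fun y => Pgfφ g f Φ y (Sum.inr i) (Sum.inl k)) x (Pi.single l 1)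
          + Pgfφ g f Φ x l (Sum.inr i) * fderiv ℝ (fun y => Pgfφ g f Φ y (Sum.inl k) (Sum.inr j)) x (Pi.single l 1)
          + Pgfφ g f Φ x l (Sum.inl k) * fderiv ℝ (fun y => Pgfφ g f Φ y (Sum.inr j) (Sum.inr i)) x (Pi.single l 1))
        = 0 := by
  have h10 : Hs g (x ∘ Sum.inr) 1 0 = Hs g (x ∘ Sum.inr) 0 1 := Hs_symm hg _ 1 0
  have h20 : Hs g (x ∘ Sum.inr) 2 0 = Hs g (x ∘ Sum.inr) 0 2 := Hs_symm hg _ 2 0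
  have h21 : Hs g (x ∘ Sum.inr) 2 1 = Hs g (x ∘ Sum.inr) 1 2 := Hs_symm hg _ 2 1
  simp only [Fintype.sum_sum_type, P_LL g f Φ x, P_LR g f Φ x, P_RL g f Φ x, P_RR g f Φ x,
    fderiv_P_LL x hg hf hΦ, fderiv_P_LR x hg, fderiv_P_RL x hg, fderiv_P_RR x,
    dG_M x hg, dG_G x hg, dCf_M x hg hf hΦ, dCf_G x hg hf hΦ,
    single_inl_comp_inl, single_inl_comp_inr, single_inr_comp_inl, single_inr_comp_inr,
    hat_zero, Aa]
  fin_cases i <;> fin_cases j <;> fin_cases k <;>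
    norm_num [hat, Fin.sum_univ_three, Pi.single_apply, Function.comp_apply, Matrix.cons_val_two, Matrix.vecHead, Matrix.vecTail] <;>
    (try norm_num [Fin.ext_iff]) <;> (try simp only [h10, h20, h21]) <;> ring

set_option maxHeartbeats 2000000 in
lemma jac_RRR (i j k : Fin 3) :
    ∑ l : Fin 3 ⊕ Fin 3,
        (Pgfφ g f Φ x l (Sum.inr j) * fderiv ℝ (fun y => Pgfφ g f Φ y (Sum.inr i) (Sum.inr k)) x (Pi.single l 1)
          + Pgfφ g f Φ x l (Sum.inr i) * fderiv ℝ (fun y => Pgfφ g f Φ y (Sum.inr k) (Sum.inr j)) x (Pi.single l 1)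
          + Pgfφ g f Φ x l (Sum.inr k) * fderiv ℝ (fun y => Pgfφ g f Φ y (Sum.inr j) (Sum.inr i)) x (Pi.single l 1))
        = 0 := by
  have h10 : Hs g (x ∘ Sum.inr) 1 0 = Hs g (x ∘ Sum.inr) 0 1 := Hs_symm hg _ 1 0
  have h20 : Hs g (x ∘ Sum.inr) 2 0 = Hs g (x ∘ Sum.inr) 0 2 := Hs_symm hg _ 2 0
  have h21 : Hs g (x ∘ Sum.inr) 2 1 = Hs g (x ∘ Sum.inr) 1 2 := Hs_symm hg _ 2 1
  simp only [Fintype.sum_sum_type, P_LL g f Φ x, P_LR g f Φ x, P_RL g f Φ x, P_RR g f Φ x,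
    fderiv_P_LL x hg hf hΦ, fderiv_P_LR x hg, fderiv_P_RL x hg, fderiv_P_RR x,
    dG_M x hg, dG_G x hg, dCf_M x hg hf hΦ, dCf_G x hg hf hΦ,
    single_inl_comp_inl, single_inl_comp_inr, single_inr_comp_inl, single_inr_comp_inr,
    hat_zero, Aa]
  fin_cases i <;> fin_cases j <;> fin_cases k <;>
    norm_num [hat, Fin.sum_univ_three, Pi.single_apply, Function.comp_apply, Matrix.cons_val_two, Matrix.vecHead, Matrix.vecTail] <;>
    (try norm_num [Fin.ext_iff]) <;> (try simp only [h10, h20, h21]) <;> ring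

end St9

/-- adding to the Poisson structure P_{g,f} a term Φ(γ)[[Γ̂,0],[0,0]],
with Φ an arbitrary smooth function of γ, preserves the Jacobi identity: the resulting
bivector is still a Poisson structure on ℝ⁶. -/
theorem statement9
    (g f Φ : (Fin 3 → ℝ) → ℝ)
    (hg : ContDiff ℝ (⊤ : ℕ∞) g) (hgpos : ∀ γ, 0 < g γ)
    (hf : ContDiff ℝ (⊤ : ℕ∞) f) (hΦ : ContDiff ℝ (⊤ : ℕ∞) Φ) :
    ∀ (x : R6) (i j k : Fin 3 ⊕ Fin 3),
      ∑ l : Fin 3 ⊕ Fin 3,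
        (Pgfφ g f Φ x l j * fderiv ℝ (fun y => Pgfφ g f Φ y i k) x (Pi.single l 1)
          + Pgfφ g f Φ x l i * fderiv ℝ (fun y => Pgfφ g f Φ y k j) x (Pi.single l 1)
          + Pgfφ g f Φ x l k * fderiv ℝ (fun y => Pgfφ g f Φ y j i) x (Pi.single l 1))
        = 0 := by
  intro x i j k
  rcases i with i | i <;> rcases j with j | j <;> rcases k with k | k
  · exact St9.jac_LLL x hg hf hΦ i j k
  · exact St9.jac_LLR x hg hf hΦ i j k
  · exact St9.jac_LRL x hg hf hΦ i j k
  · exact St9.jac_LRR x hg hf hΦ i j k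
  · exact St9.jac_RLL x hg hf hΦ i j k
  · exact St9.jac_RLR x hg hf hΦ i j k
  · exact St9.jac_RRL x hg hf hΦ i j k
  · exact St9.jac_RRR x hg hf hΦ i j k
end

section
/- The bivector P_k = g[[M̂_k, Γ̂],[Γ̂,0]] − gS[[Γ̂,0],[0,0]], where M̂_k is the skew matrix of M + k and S = (1/g)(−∂g/∂γ + f(γ)γ, M) + Φ(γ)/g, satisfies the Jacobi identity for any smooth g > 0, f, Φ and constant vector k; its Casimir functions are F₁ = γ·γ and F₂ = (M+k)·γ. -/
open Matrix

/-- The gradient of a function on ℝ⁶. -/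
noncomputable def grad6 (F : R6 → ℝ) (x : R6) : R6 :=
  fun l => fderiv ℝ F x (Pi.single l 1)

/-- The function S = (1/g)(−∂g/∂γ + f(γ)γ, M) + Φ(γ)/g of the gyrostatic bracket. -/
noncomputable def Sfun (g f Φ : (Fin 3 → ℝ) → ℝ) (x : R6) : ℝ :=
  (g (x ∘ Sum.inr))⁻¹ * ((-grad3 g (x ∘ Sum.inr) + f (x ∘ Sum.inr) • (x ∘ Sum.inr))
      ⬝ᵥ (x ∘ Sum.inl))
    + (g (x ∘ Sum.inr))⁻¹ * Φ (x ∘ Sum.inr)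

/-- The gyrostatic bivector P_k = g[[M̂_k, Γ̂],[Γ̂,0]] − gS[[Γ̂,0],[0,0]], where
M̂_k is the skew matrix of M + k. -/
noncomputable def Pk (k : Fin 3 → ℝ) (g f Φ : (Fin 3 → ℝ) → ℝ) (x : R6) :
    Matrix (Fin 3 ⊕ Fin 3) (Fin 3 ⊕ Fin 3) ℝ :=
  g (x ∘ Sum.inr) •
      Matrix.fromBlocks (hat ((x ∘ Sum.inl) + k)) (hat (x ∘ Sum.inr))
        (hat (x ∘ Sum.inr)) 0
    - (g (x ∘ Sum.inr) * Sfun g f Φ x) • Matrix.fromBlocks (hat (x ∘ Sum.inr)) 0 0 0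

/- ==================== auxiliary machinery ==================== -/

noncomputable def prR : R6 →L[ℝ] (Fin 3 → ℝ) :=
  ContinuousLinearMap.pi (fun i => ContinuousLinearMap.proj (Sum.inr i))
noncomputable def prL : R6 →L[ℝ] (Fin 3 → ℝ) :=
  ContinuousLinearMap.pi (fun i => ContinuousLinearMap.proj (Sum.inl i))

@[simp] lemma prR_apply (y : R6) (i : Fin 3) : prR y i = y (Sum.inr i) := rfl
@[simp] lemma prL_apply (y : R6) (i : Fin 3) : prL y i = y (Sum.inl i) := rfl

@[simp] lemma prR_single_l (m : Fin 3) : prR (Pi.single (Sum.inl m) (1:ℝ)) = 0 := by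
  ext i; simp [Pi.single_apply]
@[simp] lemma prR_single_r (m : Fin 3) :
    prR (Pi.single (Sum.inr m) (1:ℝ)) = Pi.single m 1 := by
  ext i; simp [Pi.single_apply]
@[simp] lemma prL_single_r (m : Fin 3) : prL (Pi.single (Sum.inr m) (1:ℝ)) = 0 := by
  ext i; simp [Pi.single_apply]
@[simp] lemma prL_single_l (m : Fin 3) :
    prL (Pi.single (Sum.inl m) (1:ℝ)) = Pi.single m 1 := by
  ext i; simp [Pi.single_apply]

noncomputable def dL (c : Fin 3 → ℝ) : (Fin 3 → ℝ) →L[ℝ] ℝ :=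
  ∑ m, c m • ContinuousLinearMap.proj m

@[simp] lemma dL_apply (c v : Fin 3 → ℝ) : dL c v = c ⬝ᵥ v := by
  simp [dL, dotProduct]

def epsv : Fin 3 → Fin 3 → Fin 3 → ℝ :=
  ![![![0,0,0], ![0,0,-1], ![0,1,0]],
    ![![0,0,1], ![0,0,0], ![-1,0,0]],
    ![![0,-1,0], ![1,0,0], ![0,0,0]]]

lemma hat_eps (a : Fin 3 → ℝ) (i j : Fin 3) : hat a i j = epsv i j ⬝ᵥ a := by
  fin_cases i <;> fin_cases j <;>
    simp [hat, epsv, dotProduct, Fin.sum_univ_three] <;> ring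

lemma hat_single (m i j : Fin 3) : hat (Pi.single m 1) i j = epsv i j m := by
  rw [hat_eps]; simp [dotProduct, Pi.single_apply, Fin.sum_univ_three] <;>
    fin_cases m <;> simp

noncomputable def Wv (g f : (Fin 3 → ℝ) → ℝ) (γ : Fin 3 → ℝ) : Fin 3 → ℝ :=
  -grad3 g γ + f γ • γ

noncomputable def gg (g : (Fin 3 → ℝ) → ℝ) : R6 → ℝ := fun y => g (prR y)

noncomputable def hh (g f Φ : (Fin 3 → ℝ) → ℝ) : R6 → ℝ :=
  fun y => Wv g f (prR y) ⬝ᵥ prL y + Φ (prR y)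

section derivs
variable {g f Φ : (Fin 3 → ℝ) → ℝ}

lemma Wv_contDiff (hg : ContDiff ℝ (⊤ : ℕ∞) g) (hf : ContDiff ℝ (⊤ : ℕ∞) f) (i : Fin 3) : ContDiff ℝ (⊤ : ℕ∞) (fun γ => Wv g f γ i) := by
  have : (fun γ : Fin 3 → ℝ => Wv g f γ i)
      = fun γ => -(fderiv ℝ g γ (Pi.single i 1)) + f γ * γ i := by
    funext γ; simp [Wv, grad3]
  rw [this]
  exact (((hg.fderiv_right (by simp)).clm_apply contDiff_const).neg).add
    (hf.mul (contDiff_apply ℝ ℝ i))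

lemma gg_hasFDerivAt (hg : ContDiff ℝ (⊤ : ℕ∞) g) (x : R6) :
    HasFDerivAt (gg g) ((fderiv ℝ g (prR x)).comp prR) x :=
  ((hg.differentiable (by simp)).differentiableAt.hasFDerivAt).comp x prR.hasFDerivAt

lemma gg_diff (hg : ContDiff ℝ (⊤ : ℕ∞) g) (x : R6) : DifferentiableAt ℝ (gg g) x :=
  (gg_hasFDerivAt hg x).differentiableAt

@[simp] lemma fderiv_gg_l (hg : ContDiff ℝ (⊤ : ℕ∞) g) (x : R6) (m : Fin 3) :
    fderiv ℝ (gg g) x (Pi.single (Sum.inl m) 1) = 0 := by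
  rw [(gg_hasFDerivAt hg x).fderiv]
  simp

@[simp] lemma fderiv_gg_r (hg : ContDiff ℝ (⊤ : ℕ∞) g) (x : R6) (m : Fin 3) :
    fderiv ℝ (gg g) x (Pi.single (Sum.inr m) 1) = grad3 g (prR x) m := by
  rw [(gg_hasFDerivAt hg x).fderiv]
  simp [grad3]

lemma hh_hasFDerivAt (hg : ContDiff ℝ (⊤ : ℕ∞) g) (hf : ContDiff ℝ (⊤ : ℕ∞) f) (hΦ : ContDiff ℝ (⊤ : ℕ∞) Φ) (x : R6) :
    HasFDerivAt (hh g f Φ)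
      ((∑ i, ((Wv g f (prR x) i) • (ContinuousLinearMap.proj (Sum.inl i) : R6 →L[ℝ] ℝ)
          + (x (Sum.inl i)) • ((fderiv ℝ (fun γ => Wv g f γ i) (prR x)).comp prR)))
        + (fderiv ℝ Φ (prR x)).comp prR) x := by
  have h1 : ∀ i : Fin 3, HasFDerivAt (fun y : R6 => Wv g f (prR y) i * y (Sum.inl i))
      ((Wv g f (prR x) i) • (ContinuousLinearMap.proj (Sum.inl i) : R6 →L[ℝ] ℝ)
        + (x (Sum.inl i)) • ((fderiv ℝ (fun γ => Wv g f γ i) (prR x)).comp prR)) x := by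
    intro i
    exact ((((Wv_contDiff hg hf i).differentiable (by simp)).differentiableAt.hasFDerivAt).comp
      x prR.hasFDerivAt).mul (ContinuousLinearMap.hasFDerivAt (ContinuousLinearMap.proj (Sum.inl i) : R6 →L[ℝ] ℝ))
  have h2 : HasFDerivAt (fun y : R6 => Φ (prR y)) ((fderiv ℝ Φ (prR x)).comp prR) x :=
    ((hΦ.differentiable (by simp)).differentiableAt.hasFDerivAt).comp x prR.hasFDerivAt
  exact (HasFDerivAt.fun_sum (fun i _ => h1 i)).fun_add h2

lemma hh_diff (hg : ContDiff ℝ (⊤ : ℕ∞) g) (hf : ContDiff ℝ (⊤ : ℕ∞) f) (hΦ : ContDiff ℝ (⊤ : ℕ∞) Φ) (x : R6) : DifferentiableAt ℝ (hh g f Φ) x :=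
  (hh_hasFDerivAt hg hf hΦ x).differentiableAt

lemma fderiv_hh_l (hg : ContDiff ℝ (⊤ : ℕ∞) g) (hf : ContDiff ℝ (⊤ : ℕ∞) f) (hΦ : ContDiff ℝ (⊤ : ℕ∞) Φ) (x : R6) (m : Fin 3) :
    fderiv ℝ (hh g f Φ) x (Pi.single (Sum.inl m) 1) = Wv g f (prR x) m := by
  rw [(hh_hasFDerivAt hg hf hΦ x).fderiv]
  simp [Pi.single_apply]

end derivs

@[simp] lemma prR_eq (y : R6) : prR y = y ∘ Sum.inr := rfl
@[simp] lemma prL_eq (y : R6) : prL y = y ∘ Sum.inl := rfl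

noncomputable def Pe (M γ k : Fin 3 → ℝ) (g h : ℝ) : (Fin 3 ⊕ Fin 3) → (Fin 3 ⊕ Fin 3) → ℝ
  | Sum.inl i, Sum.inl j => g * hat (M + k) i j - h * hat γ i j
  | Sum.inl i, Sum.inr j => g * hat γ i j
  | Sum.inr i, Sum.inl j => g * hat γ i j
  | Sum.inr _, Sum.inr _ => 0

noncomputable def De (M γ k Gr c d : Fin 3 → ℝ) (g h : ℝ) :
    (Fin 3 ⊕ Fin 3) → (Fin 3 ⊕ Fin 3) → (Fin 3 ⊕ Fin 3) → ℝ
  | Sum.inl m, Sum.inl i, Sum.inl j => g * hat (Pi.single m 1) i j - c m * hat γ i j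
  | Sum.inl _, Sum.inl _, Sum.inr _ => 0
  | Sum.inl _, Sum.inr _, _ => 0
  | Sum.inr m, Sum.inl i, Sum.inl j =>
      Gr m * hat (M + k) i j - d m * hat γ i j - h * hat (Pi.single m 1) i j
  | Sum.inr m, Sum.inl i, Sum.inr j => Gr m * hat γ i j + g * hat (Pi.single m 1) i j
  | Sum.inr m, Sum.inr i, Sum.inl j => Gr m * hat γ i j + g * hat (Pi.single m 1) i j
  | Sum.inr _, Sum.inr _, Sum.inr _ => 0

section entries
variable {g f Φ : (Fin 3 → ℝ) → ℝ} {k : Fin 3 → ℝ}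

lemma gS (hgpos : ∀ γ, 0 < g γ) (x : R6) :
    g (x ∘ Sum.inr) * Sfun g f Φ x = hh g f Φ x := by
  have h := (hgpos (x ∘ Sum.inr)).ne'
  simp only [Sfun, hh, Wv, prR_eq, prL_eq]
  field_simp

lemma Pk_eq_Pe (hgpos : ∀ γ, 0 < g γ) (x : R6) (l j : Fin 3 ⊕ Fin 3) :
    Pk k g f Φ x l j
      = Pe (x ∘ Sum.inl) (x ∘ Sum.inr) k (g (x ∘ Sum.inr)) (hh g f Φ x) l j := by
  obtain l|l := l <;> obtain j|j := j <;>
    simp [Pk, Pe, Matrix.sub_apply, Matrix.smul_apply, smul_eq_mul, gS hgpos x]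

lemma entry_ll (hgpos : ∀ γ, 0 < g γ) (i j : Fin 3) :
    (fun y : R6 => Pk k g f Φ y (Sum.inl i) (Sum.inl j))
      = fun y => gg g y * (((dL (epsv i j)).comp prL) y + hat k i j)
          - hh g f Φ y * ((dL (epsv i j)).comp prR) y := by
  funext y
  simp only [Pk, Matrix.sub_apply, Matrix.smul_apply, Matrix.fromBlocks_apply₁₁,
    smul_eq_mul, gS hgpos y, gg, ContinuousLinearMap.comp_apply, dL_apply, prR_eq, prL_eq]
  rw [hat_eps ((y ∘ Sum.inl) + k), hat_eps (y ∘ Sum.inr), hat_eps k, dotProduct_add]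

lemma entry_lr (hgpos : ∀ γ, 0 < g γ) (i j : Fin 3) :
    (fun y : R6 => Pk k g f Φ y (Sum.inl i) (Sum.inr j))
      = fun y => gg g y * ((dL (epsv i j)).comp prR) y := by
  funext y
  simp only [Pk, Matrix.sub_apply, Matrix.smul_apply, Matrix.fromBlocks_apply₁₂,
    smul_eq_mul, gg, ContinuousLinearMap.comp_apply, dL_apply, prR_eq,
    Matrix.zero_apply, mul_zero, sub_zero]
  rw [hat_eps (y ∘ Sum.inr)]

lemma entry_rl (hgpos : ∀ γ, 0 < g γ) (i j : Fin 3) :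
    (fun y : R6 => Pk k g f Φ y (Sum.inr i) (Sum.inl j))
      = fun y => gg g y * ((dL (epsv i j)).comp prR) y := by
  funext y
  simp only [Pk, Matrix.sub_apply, Matrix.smul_apply, Matrix.fromBlocks_apply₂₁,
    smul_eq_mul, gg, ContinuousLinearMap.comp_apply, dL_apply, prR_eq,
    Matrix.zero_apply, mul_zero, sub_zero]
  rw [hat_eps (y ∘ Sum.inr)]

lemma entry_rr (i j : Fin 3) :
    (fun y : R6 => Pk k g f Φ y (Sum.inr i) (Sum.inr j)) = fun _ => 0 := by
  funext y
  simp [Pk, Matrix.sub_apply, Matrix.smul_apply, Matrix.fromBlocks_apply₂₂]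

@[simp] lemma gg_apply (g : (Fin 3 → ℝ) → ℝ) (x : R6) : gg g x = g (x ∘ Sum.inr) := rfl

lemma Wv_apply (g f : (Fin 3 → ℝ) → ℝ) (γ : Fin 3 → ℝ) (m : Fin 3) :
    Wv g f γ m = -grad3 g γ m + f γ * γ m := by simp [Wv]

@[simp] lemma single_comp_ll (m : Fin 3) :
    (Pi.single (Sum.inl m) (1:ℝ) : R6) ∘ (Sum.inl : Fin 3 → Fin 3 ⊕ Fin 3) = Pi.single m 1 := by
  funext i; simp [Pi.single_apply]
@[simp] lemma single_comp_lr (m : Fin 3) :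
    (Pi.single (Sum.inl m) (1:ℝ) : R6) ∘ (Sum.inr : Fin 3 → Fin 3 ⊕ Fin 3) = 0 := by
  funext i; simp [Pi.single_apply]
@[simp] lemma single_comp_rl (m : Fin 3) :
    (Pi.single (Sum.inr m) (1:ℝ) : R6) ∘ (Sum.inl : Fin 3 → Fin 3 ⊕ Fin 3) = 0 := by
  funext i; simp [Pi.single_apply]
@[simp] lemma single_comp_rr (m : Fin 3) :
    (Pi.single (Sum.inr m) (1:ℝ) : R6) ∘ (Sum.inr : Fin 3 → Fin 3 ⊕ Fin 3) = Pi.single m 1 := by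
  funext i; simp [Pi.single_apply]

lemma key_fderiv (hg : ContDiff ℝ (⊤ : ℕ∞) g) (hf : ContDiff ℝ (⊤ : ℕ∞) f) (hΦ : ContDiff ℝ (⊤ : ℕ∞) Φ)
    (hgpos : ∀ γ, 0 < g γ) (x : R6) (l i j : Fin 3 ⊕ Fin 3) :
    fderiv ℝ (fun y => Pk k g f Φ y i j) x (Pi.single l 1)
      = De (x ∘ Sum.inl) (x ∘ Sum.inr) k (grad3 g (x ∘ Sum.inr))
          (fun m => -grad3 g (x ∘ Sum.inr) m + f (x ∘ Sum.inr) * (x ∘ Sum.inr) m)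
          (fun m => fderiv ℝ (hh g f Φ) x (Pi.single (Sum.inr m) 1))
          (g (x ∘ Sum.inr)) (hh g f Φ x) l i j := by
  obtain i|i := i <;> obtain j|j := j
  · rw [entry_ll hgpos i j]
    have H := ((gg_diff hg x).hasFDerivAt.fun_mul
        ((((dL (epsv i j)).comp prL).hasFDerivAt (x := x)).add_const (hat k i j))).fun_sub
      ((hh_diff hg hf hΦ x).hasFDerivAt.fun_mul (((dL (epsv i j)).comp prR).hasFDerivAt (x := x)))
    rw [H.fderiv]
    obtain l|l := l <;>
    · simp only [De, ContinuousLinearMap.sub_apply, ContinuousLinearMap.add_apply,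
        ContinuousLinearMap.smul_apply, ContinuousLinearMap.comp_apply,
        prL_single_l, prL_single_r, prR_single_l, prR_single_r, single_comp_ll, single_comp_lr, single_comp_rl, single_comp_rr, map_zero, dL_apply,
        dotProduct_single, dotProduct_zero, dotProduct_add,
        fderiv_gg_l hg, fderiv_gg_r hg, fderiv_hh_l hg hf hΦ, Wv_apply,
        smul_eq_mul, hat_eps, hat_single, mul_one, gg_apply, prL_eq, prR_eq]
      ring
  · rw [entry_lr hgpos i j]
    have H := (gg_diff hg x).hasFDerivAt.fun_mul (((dL (epsv i j)).comp prR).hasFDerivAt (x := x))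
    rw [H.fderiv]
    obtain l|l := l <;>
    · simp only [De, ContinuousLinearMap.add_apply,
        ContinuousLinearMap.smul_apply, ContinuousLinearMap.comp_apply,
        prR_single_l, prR_single_r, single_comp_ll, single_comp_lr, single_comp_rl, single_comp_rr, map_zero, dL_apply,
        dotProduct_single, dotProduct_zero,
        fderiv_gg_l hg, fderiv_gg_r hg,
        smul_eq_mul, hat_eps, hat_single, mul_one, gg_apply, prR_eq]
      ring
  · rw [entry_rl hgpos i j]
    have H := (gg_diff hg x).hasFDerivAt.fun_mul (((dL (epsv i j)).comp prR).hasFDerivAt (x := x))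
    rw [H.fderiv]
    obtain l|l := l <;>
    · simp only [De, ContinuousLinearMap.add_apply,
        ContinuousLinearMap.smul_apply, ContinuousLinearMap.comp_apply,
        prR_single_l, prR_single_r, single_comp_ll, single_comp_lr, single_comp_rl, single_comp_rr, map_zero, dL_apply,
        dotProduct_single, dotProduct_zero,
        fderiv_gg_l hg, fderiv_gg_r hg,
        smul_eq_mul, hat_eps, hat_single, mul_one, gg_apply, prR_eq]
      ring
  · rw [entry_rr i j, fderiv_const_apply 0]
    obtain l|l := l <;> simp [De]

end entries

set_option maxHeartbeats 0 in
lemma jacobi_alg (M γ k Gr d : Fin 3 → ℝ) (g f h : ℝ) (i j l' : Fin 3 ⊕ Fin 3) :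
    ∑ l : Fin 3 ⊕ Fin 3,
      (Pe M γ k g h l j * De M γ k Gr (fun m => -Gr m + f * γ m) d g h l i l'
        + Pe M γ k g h l i * De M γ k Gr (fun m => -Gr m + f * γ m) d g h l l' j
        + Pe M γ k g h l l' * De M γ k Gr (fun m => -Gr m + f * γ m) d g h l j i) = 0 := by
  obtain i|i := i <;> obtain j|j := j <;> obtain l'|l' := l' <;>
    fin_cases i <;> fin_cases j <;> fin_cases l' <;>
    · simp [Pe, De, hat, Fintype.sum_sum_type, Fin.sum_univ_three, Pi.single_apply]
      try ring

set_option maxHeartbeats 1000000 in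
/-- the bivector P_k satisfies the Jacobi identity for any smooth
g > 0, f, Φ and constant vector k, and F₁ = γ·γ, F₂ = (M+k)·γ are Casimir functions. -/
theorem statement16
    (k : Fin 3 → ℝ) (g f Φ : (Fin 3 → ℝ) → ℝ)
    (hg : ContDiff ℝ (⊤ : ℕ∞) g) (hgpos : ∀ γ, 0 < g γ)
    (hf : ContDiff ℝ (⊤ : ℕ∞) f) (hΦ : ContDiff ℝ (⊤ : ℕ∞) Φ)
    (F₁ F₂ : R6 → ℝ)
    (hF₁ : ∀ x, F₁ x = (x ∘ Sum.inr) ⬝ᵥ (x ∘ Sum.inr))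
    (hF₂ : ∀ x, F₂ x = ((x ∘ Sum.inl) + k) ⬝ᵥ (x ∘ Sum.inr)) :
    (∀ (x : R6) (i j l' : Fin 3 ⊕ Fin 3),
      ∑ l : Fin 3 ⊕ Fin 3,
        (Pk k g f Φ x l j * fderiv ℝ (fun y => Pk k g f Φ y i l') x (Pi.single l 1)
          + Pk k g f Φ x l i * fderiv ℝ (fun y => Pk k g f Φ y l' j) x (Pi.single l 1)
          + Pk k g f Φ x l l' * fderiv ℝ (fun y => Pk k g f Φ y j i) x (Pi.single l 1))
        = 0) ∧
    (∀ x : R6, (Pk k g f Φ x).mulVec (grad6 F₁ x) = 0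
      ∧ (Pk k g f Φ x).mulVec (grad6 F₂ x) = 0) := by
  constructor
  · intro x i j l'
    simp only [key_fderiv hg hf hΦ hgpos]
    simp only [Pk_eq_Pe hgpos]
    exact jacobi_alg (x ∘ Sum.inl) (x ∘ Sum.inr) k (grad3 g (x ∘ Sum.inr))
      (fun m => fderiv ℝ (hh g f Φ) x (Pi.single (Sum.inr m) 1))
      (g (x ∘ Sum.inr)) (f (x ∘ Sum.inr)) (hh g f Φ x) i j l'
  · intro x
    have hF1fun : F₁ = fun y : R6 => (y ∘ Sum.inr) ⬝ᵥ (y ∘ Sum.inr) := funext hF₁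
    have hF2fun : F₂ = fun y : R6 => ((y ∘ Sum.inl) + k) ⬝ᵥ (y ∘ Sum.inr) := funext hF₂
    have h1 : HasFDerivAt F₁
        (∑ i : Fin 3, (x (Sum.inr i) • (ContinuousLinearMap.proj (Sum.inr i) : R6 →L[ℝ] ℝ)
          + x (Sum.inr i) • (ContinuousLinearMap.proj (Sum.inr i) : R6 →L[ℝ] ℝ))) x := by
      rw [hF1fun]
      exact HasFDerivAt.fun_sum (fun i _ =>
        (ContinuousLinearMap.hasFDerivAt
            (ContinuousLinearMap.proj (Sum.inr i) : R6 →L[ℝ] ℝ)).fun_mul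
          (ContinuousLinearMap.hasFDerivAt
            (ContinuousLinearMap.proj (Sum.inr i) : R6 →L[ℝ] ℝ)))
    have h2 : HasFDerivAt F₂
        (∑ i : Fin 3, ((x (Sum.inl i) + k i) • (ContinuousLinearMap.proj (Sum.inr i) : R6 →L[ℝ] ℝ)
          + x (Sum.inr i) • (ContinuousLinearMap.proj (Sum.inl i) : R6 →L[ℝ] ℝ))) x := by
      rw [hF2fun]
      exact HasFDerivAt.fun_sum (fun i _ =>
        ((ContinuousLinearMap.hasFDerivAt
            (ContinuousLinearMap.proj (Sum.inl i) : R6 →L[ℝ] ℝ)).add_const (k i)).fun_mul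
          (ContinuousLinearMap.hasFDerivAt
            (ContinuousLinearMap.proj (Sum.inr i) : R6 →L[ℝ] ℝ)))
    have e1l : ∀ m, grad6 F₁ x (Sum.inl m) = 0 := by
      intro m
      simp [grad6, h1.fderiv, Pi.single_apply, ite_mul, zero_mul, Finset.sum_ite_eq, Finset.sum_ite_eq']
    have e1r : ∀ m, grad6 F₁ x (Sum.inr m) = 2 * x (Sum.inr m) := by
      intro m
      fin_cases m <;> simp [grad6, h1.fderiv, Pi.single_apply, Fin.sum_univ_three] <;> try ring
    have e2l : ∀ m, grad6 F₂ x (Sum.inl m) = x (Sum.inr m) := by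
      intro m
      fin_cases m <;> simp [grad6, h2.fderiv, Pi.single_apply, Fin.sum_univ_three] <;> try ring
    have e2r : ∀ m, grad6 F₂ x (Sum.inr m) = x (Sum.inl m) + k m := by
      intro m
      fin_cases m <;> simp [grad6, h2.fderiv, Pi.single_apply, Fin.sum_univ_three] <;> try ring
    constructor <;>
    · funext l
      simp only [Matrix.mulVec, dotProduct, Pi.zero_apply,
        Pk_eq_Pe hgpos, Fintype.sum_sum_type, e1l, e1r, e2l, e2r]
      obtain l|l := l <;> fin_cases l <;>
      · simp [Pe, hat, Fin.sum_univ_three]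
        try ring
end
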